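/- For every n ≥ 1, the number of Motzkin paths of length n is equal to the number of Dyck paths of semilength n that avoid the factor 'uuu' (i.e., have no ascent of length ≥ 3). -/

import Mathlib

/-- Extend a word `w : Fin m → Bool` to `ℕ` by `false`. (`true` = up-step `u`,
`false` = down-step `d`.) -/
def wext {m : ℕ} (w : Fin m → Bool) (i : ℕ) : Bool :=
  if h : i < m then w ⟨i, h⟩ else false

/-- Number of `true`s (up-steps) among the first `i` letters. -/
def upCount {m : ℕ} (w : Fin m → Bool) (i : ℕ) : ℕ :=
  ((Finset.range i).filter fun t => wext w t = true).card

/-- Number of `false`s (down-steps) among the first `i` letters. -/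
def downCount {m : ℕ} (w : Fin m → Bool) (i : ℕ) : ℕ :=
  ((Finset.range i).filter fun t => wext w t = false).card

/-- `w` is a Dyck word of semilength `n`: `n` up-steps among its `2n` letters and
every prefix has at least as many `u`'s as `d`'s. -/
def IsDyck (n : ℕ) (w : Fin (2 * n) → Bool) : Prop :=
  upCount w (2 * n) = n ∧ ∀ i ≤ 2 * n, downCount w i ≤ upCount w i

/-- Number of peaks (occurrences of the factor `ud`) of a word. -/
def peaks {m : ℕ} (w : Fin m → Bool) : ℕ :=
  ((Finset.range m).filter fun i => wext w i = true ∧ wext w (i + 1) = false).card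

/-- A Motzkin step: up `(1,1)`, level `(1,0)`, or down `(1,-1)`. -/
inductive MStep | up | level | down
deriving DecidableEq

/-- Number of steps equal to `s` among the first `i` steps of `p`. -/
def mCount {n : ℕ} (p : Fin n → MStep) (s : MStep) (i : ℕ) : ℕ :=
  ((Finset.range n).filter fun t => t < i ∧ ∃ h : t < n, p ⟨t, h⟩ = s).card

/-- A Motzkin path of length `n`: `n` steps from `(0,0)` to `(n,0)` staying weakly
above the x-axis. -/
def IsMotzkin {n : ℕ} (p : Fin n → MStep) : Prop :=
  mCount p .up n = mCount p .down n ∧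
    ∀ i ≤ n, mCount p .down i ≤ mCount p .up i

/-- `w` avoids the factor `uuu`: it has no ascent of length `≥ 3`. -/
def AvoidsUUU {m : ℕ} (w : Fin m → Bool) : Prop :=
  ∀ i, ¬(wext w i = true ∧ wext w (i + 1) = true ∧ wext w (i + 2) = true)

namespace Stmt14

/-- height increment of a Dyck letter -/
def bval : Bool → ℤ | true => 1 | false => -1

/-- height of a Dyck word -/
def hB (w : List Bool) : ℤ := (w.map bval).sum

/-- height increment of a Motzkin step -/
def mval : MStep → ℤ | .up => 1 | .level => 0 | .down => -1

/-- height of a Motzkin path -/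
def hM (l : List MStep) : ℤ := (l.map mval).sum

/-- list-level Motzkin condition -/
def MotzL (l : List MStep) : Prop := hM l = 0 ∧ ∀ i, 0 ≤ hM (l.take i)

/-- list-level Dyck condition -/
def DyckL (w : List Bool) : Prop := hB w = 0 ∧ ∀ i, 0 ≤ hB (w.take i)

/-- list-level uuu-avoidance -/
def NoU3 (w : List Bool) : Prop :=
  ∀ i, ¬(w.getD i false = true ∧ w.getD (i + 1) false = true ∧ w.getD (i + 2) false = true)

/-- the encoding Motzkin → Dyck: up ↦ uud, level ↦ ud, down ↦ d -/
def enc : List MStep → List Bool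
  | [] => []
  | .up :: r => true :: true :: false :: enc r
  | .level :: r => true :: false :: enc r
  | .down :: r => false :: enc r

@[simp] lemma hB_nil : hB [] = 0 := rfl
@[simp] lemma hB_cons (a : Bool) (w : List Bool) : hB (a :: w) = bval a + hB w := by
  simp [hB]
@[simp] lemma hM_nil : hM [] = 0 := rfl
@[simp] lemma hM_cons (a : MStep) (l : List MStep) : hM (a :: l) = mval a + hM l := by
  simp [hM]

lemma hB_append (v w : List Bool) : hB (v ++ w) = hB v + hB w := by simp [hB]

lemma enc_append (a b : List MStep) : enc (a ++ b) = enc a ++ enc b := by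
  induction a with
  | nil => rfl
  | cons s r ih => cases s <;> simp [enc, ih]

lemma hB_enc (l : List MStep) : hB (enc l) = hM l := by
  induction l with
  | nil => rfl
  | cons s r ih => cases s <;> simp [enc, ih, bval, mval] <;> ring

lemma enc_length (l : List MStep) : ((enc l).length : ℤ) = 2 * l.length + hM l := by
  induction l with
  | nil => rfl
  | cons s r ih => cases s <;> simp [enc, ih, mval] <;> push_cast <;> ring

lemma hM_count (l : List MStep) :
    hM l = (l.count .up : ℤ) - l.count .down := by
  induction l with
  | nil => rfl
  | cons s r ih => cases s <;> simp [List.count_cons, ih, mval] <;> ring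

lemma hB_count (w : List Bool) :
    hB w = (w.count true : ℤ) - w.count false := by
  induction w with
  | nil => rfl
  | cons a r ih => cases a <;> simp [List.count_cons, ih, bval] <;> ring

lemma count_add_count (w : List Bool) : w.count true + w.count false = w.length := by
  induction w with
  | nil => rfl
  | cons a r ih => cases a <;> simp [List.count_cons, ih] <;> omega

/-- prefix-height transfer, forward direction -/
lemma enc_take (h₀ : ℤ) (l : List MStep)
    (h : ∀ j, 0 ≤ h₀ + hM (l.take j)) : ∀ i, 0 ≤ h₀ + hB ((enc l).take i) := by
  induction l generalizing h₀ with
  | nil => intro i; simpa [enc] using h 0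
  | cons s r ih =>
    have h0 : 0 ≤ h₀ := by simpa using h 0
    have hr : ∀ j, 0 ≤ (h₀ + mval s) + hM (r.take j) := by
      intro j
      have := h (j + 1)
      simp only [List.take_succ_cons, hM_cons] at this
      linarith
    cases s with
    | up =>
      have ih' := ih (h₀ + 1) (by intro j; have := hr j; simp [mval] at this ⊢; linarith)
      intro i
      match i with
      | 0 => simpa using h0
      | 1 => simp [enc, bval]; linarith
      | 2 => simp [enc, bval]; linarith
      | (j + 3) =>
        have := ih' j
        simp only [enc, List.take_succ_cons, hB_cons, bval] at this ⊢
        linarith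
    | level =>
      have ih' := ih h₀ (by intro j; have := hr j; simp [mval] at this ⊢; linarith)
      intro i
      match i with
      | 0 => simpa using h0
      | 1 => simp [enc, bval]; linarith
      | (j + 2) =>
        have := ih' j
        simp only [enc, List.take_succ_cons, hB_cons, bval] at this ⊢
        linarith
    | down =>
      have ih' := ih (h₀ - 1) (by intro j; have := hr j; simp [mval] at this ⊢; linarith)
      intro i
      match i with
      | 0 => simpa using h0
      | (j + 1) =>
        have := ih' j
        simp only [enc, List.take_succ_cons, hB_cons, bval] at this ⊢
        linarith

lemma noU3_cons {a : Bool} {w : List Bool} (hw : NoU3 w)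
    (h : ¬(a = true ∧ w.getD 0 false = true ∧ w.getD 1 false = true)) : NoU3 (a :: w) := by
  intro i
  cases i with
  | zero => simpa using h
  | succ j => simpa using hw j

lemma noU3_tail {a : Bool} {w : List Bool} (hw : NoU3 (a :: w)) : NoU3 w := by
  intro i
  simpa using hw (i + 1)

lemma noU3_nil : NoU3 [] := by intro i; simp

lemma enc_noU3 (l : List MStep) : NoU3 (enc l) := by
  induction l with
  | nil => exact noU3_nil
  | cons s r ih =>
    cases s with
    | up =>
      exact noU3_cons (noU3_cons (noU3_cons ih (by simp)) (by simp)) (by simp)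
    | level =>
      exact noU3_cons (noU3_cons ih (by simp)) (by simp)
    | down =>
      exact noU3_cons ih (by simp)

lemma enc_inj : Function.Injective enc := by
  intro l1
  induction l1 with
  | nil =>
    intro l2 h
    cases l2 with
    | nil => rfl
    | cons s r => cases s <;> simp [enc] at h
  | cons s r ih =>
    intro l2 h
    cases l2 with
    | nil => cases s <;> simp [enc] at h
    | cons s2 r2 =>
      cases s <;> cases s2 <;> simp [enc] at h <;> rw [ih h]

lemma exists_dec (N : ℕ) : ∀ w : List Bool, w.length ≤ N → ∀ h₀ : ℕ, NoU3 w →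
    (∀ i, 0 ≤ (h₀ : ℤ) + hB (w.take i)) → (h₀ : ℤ) + hB w = 0 → ∃ l, enc l = w := by
  induction N with
  | zero =>
    intro w hw h₀ _ _ hsum
    have : w = [] := List.eq_nil_of_length_eq_zero (Nat.le_zero.mp hw)
    exact ⟨[], by simp [this, enc]⟩
  | succ N ih =>
    intro w hlen h₀ hno hpre hsum
    rcases w with _ | ⟨(_ | _), r⟩
    · exact ⟨[], rfl⟩
    · -- w = false :: r
      have h1 : 1 ≤ h₀ := by
        have := hpre 1
        simp [bval] at this
        omega
      have hcast : ((h₀ - 1 : ℕ) : ℤ) = (h₀ : ℤ) - 1 := by omega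
      obtain ⟨l, hl⟩ := ih r (by simp at hlen; omega) (h₀ - 1) (noU3_tail hno)
        (by intro i; have := hpre (i + 1);
            simp only [List.take_succ_cons, hB_cons, bval] at this; rw [hcast]; linarith)
        (by simp only [hB_cons, bval] at hsum; rw [hcast]; linarith)
      exact ⟨.down :: l, by simp [enc, hl]⟩
    · -- w = true :: r
      rcases r with _ | ⟨(_ | _), r2⟩
      · exfalso; simp [bval] at hsum; omega
      · -- true :: false :: r2
        obtain ⟨l, hl⟩ := ih r2 (by simp at hlen ⊢; omega) h₀ (noU3_tail (noU3_tail hno))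
          (by intro i; have := hpre (i + 2);
              simp only [List.take_succ_cons, hB_cons, bval] at this; linarith)
          (by simp only [hB_cons, bval] at hsum; linarith)
        exact ⟨.level :: l, by simp [enc, hl]⟩
      · -- true :: true :: r2
        rcases r2 with _ | ⟨(_ | _), r3⟩
        · exfalso; simp [bval] at hsum; omega
        · -- true :: true :: false :: r3
          obtain ⟨l, hl⟩ := ih r3 (by simp at hlen ⊢; omega) (h₀ + 1)
            (noU3_tail (noU3_tail (noU3_tail hno)))
            (by intro i; have := hpre (i + 3);
                simp only [List.take_succ_cons, hB_cons, bval] at this; push_cast; linarith)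
            (by simp only [hB_cons, bval] at hsum; push_cast; linarith)
          exact ⟨.up :: l, by simp [enc, hl]⟩
        · -- true :: true :: true :: r3
          exact absurd (hno 0) (by simp)

lemma card_count {α : Type*} [DecidableEq α] (l : List α) (s d : α) :
    ∀ i, i ≤ l.length →
      ((Finset.range i).filter (fun t => l.getD t d = s)).card = (l.take i).count s := by
  intro i
  induction i with
  | zero => simp
  | succ i ih =>
    intro h
    have hi : i < l.length := h
    have ht : l.take (i + 1) = l.take i ++ [l[i]] := by
      rw [List.take_succ, List.getElem?_eq_getElem hi]
      rfl
    have hgd : l.getD i d = l[i] := List.getD_eq_getElem l d hi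
    rw [Finset.range_add_one, Finset.filter_insert, ht, List.count_append]
    by_cases hc : l[i] = s
    · rw [if_pos (by rw [hgd]; exact hc), Finset.card_insert_of_notMem (by simp),
        ih (le_of_lt hi)]
      simp [hc]
    · rw [if_neg (by rw [hgd]; exact hc), ih (le_of_lt hi)]
      simp [List.count_singleton', hc]

lemma wext_eq {m : ℕ} (w : Fin m → Bool) (i : ℕ) :
    wext w i = (List.ofFn w).getD i false := by
  unfold wext
  by_cases h : i < m
  · rw [dif_pos h, List.getD_eq_getElem _ _ (by simpa using h)]
    simp
  · rw [dif_neg h, List.getD_eq_default _ _ (by simpa using not_lt.mp h)]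

lemma upCount_eq {m : ℕ} (w : Fin m → Bool) (i : ℕ) (hi : i ≤ m) :
    upCount w i = ((List.ofFn w).take i).count true := by
  unfold upCount
  simp only [wext_eq]
  exact card_count _ _ _ i (by simpa using hi)

lemma downCount_eq {m : ℕ} (w : Fin m → Bool) (i : ℕ) (hi : i ≤ m) :
    downCount w i = ((List.ofFn w).take i).count false := by
  unfold downCount
  simp only [wext_eq]
  exact card_count _ _ _ i (by simpa using hi)

lemma mCount_eq {n : ℕ} (p : Fin n → MStep) (s : MStep) (i : ℕ) (hi : i ≤ n) :
    mCount p s i = ((List.ofFn p).take i).count s := by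
  have h1 : ((Finset.range n).filter fun t => t < i ∧ ∃ h : t < n, p ⟨t, h⟩ = s)
      = (Finset.range i).filter (fun t => (List.ofFn p).getD t MStep.up = s) := by
    ext t
    simp only [Finset.mem_filter, Finset.mem_range]
    constructor
    · rintro ⟨htn, hti, h, he⟩
      refine ⟨hti, ?_⟩
      rw [List.getD_eq_getElem _ _ (by simpa using h)]
      simpa [List.getElem_ofFn] using he
    · rintro ⟨hti, he⟩
      have htn : t < n := lt_of_lt_of_le hti hi
      refine ⟨htn, hti, htn, ?_⟩
      rw [List.getD_eq_getElem _ _ (by simpa using htn)] at he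
      simpa [List.getElem_ofFn] using he
  unfold mCount
  rw [h1, card_count _ _ _ i (by simpa using hi)]

lemma isMotzkin_iff {n : ℕ} (p : Fin n → MStep) : IsMotzkin p ↔ MotzL (List.ofFn p) := by
  have len : (List.ofFn p).length = n := by simp
  have htake : ∀ i, n ≤ i → (List.ofFn p).take i = List.ofFn p := by
    intro i h; exact List.take_of_length_le (by omega)
  constructor
  · rintro ⟨h1, h2⟩
    have hfull : hM (List.ofFn p) = 0 := by
      rw [hM_count]
      rw [mCount_eq p .up n le_rfl, mCount_eq p .down n le_rfl, htake n le_rfl] at h1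
      omega
    refine ⟨hfull, fun i => ?_⟩
    by_cases hi : i ≤ n
    · have := h2 i hi
      rw [mCount_eq p .up i hi, mCount_eq p .down i hi] at this
      rw [hM_count]
      omega
    · rw [htake i (by omega), hfull]
  · rintro ⟨h1, h2⟩
    constructor
    · rw [mCount_eq p .up n le_rfl, mCount_eq p .down n le_rfl, htake n le_rfl]
      rw [hM_count] at h1
      omega
    · intro i hi
      have := h2 i
      rw [hM_count] at this
      rw [mCount_eq p .up i hi, mCount_eq p .down i hi]
      omega

lemma isDyck_iff {n : ℕ} (w : Fin (2 * n) → Bool) : IsDyck n w ↔ DyckL (List.ofFn w) := by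
  have len : (List.ofFn w).length = 2 * n := by simp
  have htake : ∀ i, 2 * n ≤ i → (List.ofFn w).take i = List.ofFn w := by
    intro i h; exact List.take_of_length_le (by omega)
  have hcc := count_add_count (List.ofFn w)
  rw [len] at hcc
  constructor
  · rintro ⟨h1, h2⟩
    have hfull : hB (List.ofFn w) = 0 := by
      rw [hB_count]
      rw [upCount_eq w (2 * n) le_rfl, htake _ le_rfl] at h1
      omega
    refine ⟨hfull, fun i => ?_⟩
    by_cases hi : i ≤ 2 * n
    · have := h2 i hi
      rw [upCount_eq w i hi, downCount_eq w i hi] at this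
      rw [hB_count]
      omega
    · rw [htake i (by omega), hfull]
  · rintro ⟨h1, h2⟩
    rw [hB_count] at h1
    constructor
    · rw [upCount_eq w (2 * n) le_rfl, htake _ le_rfl]
      omega
    · intro i hi
      have := h2 i
      rw [hB_count] at this
      rw [upCount_eq w i hi, downCount_eq w i hi]
      omega

lemma avoids_iff {m : ℕ} (w : Fin m → Bool) : AvoidsUUU w ↔ NoU3 (List.ofFn w) := by
  unfold AvoidsUUU NoU3
  simp only [wext_eq]

/-- the standard equivalence between tuples and lists of fixed length -/
def listFin (α : Type*) (n : ℕ) : (Fin n → α) ≃ {l : List α // l.length = n} where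
  toFun p := ⟨List.ofFn p, List.length_ofFn⟩
  invFun l i := l.1.get (Fin.cast l.2.symm i)
  left_inv p := by
    funext i
    simp [List.get_ofFn]
  right_inv l := by
    apply Subtype.ext
    apply List.ext_get
    · simp [l.2]
    · intro i h1 h2
      simp [List.get_ofFn]

lemma enc_mem {n : ℕ} (l : List MStep) (hlen : l.length = n) (hm : MotzL l) :
    (enc l).length = 2 * n ∧ (DyckL (enc l) ∧ NoU3 (enc l)) := by
  obtain ⟨h1, h2⟩ := hm
  refine ⟨?_, ⟨⟨?_, ?_⟩, enc_noU3 l⟩⟩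
  · have := enc_length l
    rw [h1, hlen] at this
    omega
  · rw [hB_enc]; exact h1
  · intro i
    have := enc_take 0 l (by simpa using h2) i
    simpa using this

lemma dec_mem {n : ℕ} (w : List Bool) (hlen : w.length = 2 * n) (hd : DyckL w) (hno : NoU3 w) :
    ∃ l : List MStep, l.length = n ∧ MotzL l ∧ enc l = w := by
  obtain ⟨hw0, hwpre⟩ := hd
  obtain ⟨l, hl⟩ := exists_dec w.length w le_rfl 0 hno (by simpa using hwpre)
    (by simpa using hw0)
  have hMl : hM l = 0 := by rw [← hB_enc, hl]; exact hw0
  have hlength : l.length = n := by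
    have := enc_length l
    rw [hl, hlen, hMl] at this
    omega
  refine ⟨l, hlength, ⟨hMl, fun j => ?_⟩, hl⟩
  have hsplit : enc (l.take j) ++ enc (l.drop j) = w := by
    rw [← enc_append, List.take_append_drop, hl]
  have heq : hM (l.take j) = hB (w.take (enc (l.take j)).length) := by
    rw [← hB_enc, ← hsplit, List.take_left]
  rw [heq]
  exact hwpre _

end Stmt14

theorem stmt14 (n : ℕ) (hn : 1 ≤ n) :
    Nat.card {p : Fin n → MStep // IsMotzkin p}
      = Nat.card {w : Fin (2 * n) → Bool // IsDyck n w ∧ AvoidsUUU w} := by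
  classical
  apply Nat.card_congr
  let e1 : {p : Fin n → MStep // IsMotzkin p} ≃ {l : List MStep // l.length = n ∧ Stmt14.MotzL l} :=
    ((Stmt14.listFin MStep n).subtypeEquiv (fun p => Stmt14.isMotzkin_iff p)).trans
      (Equiv.subtypeSubtypeEquivSubtypeInter _ _)
  let e3 : {w : Fin (2 * n) → Bool // IsDyck n w ∧ AvoidsUUU w}
      ≃ {w : List Bool // w.length = 2 * n ∧ (Stmt14.DyckL w ∧ Stmt14.NoU3 w)} :=
    ((Stmt14.listFin Bool (2 * n)).subtypeEquiv
        (fun w => and_congr (Stmt14.isDyck_iff w) (Stmt14.avoids_iff w))).trans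
      (Equiv.subtypeSubtypeEquivSubtypeInter _ _)
  let f : {l : List MStep // l.length = n ∧ Stmt14.MotzL l}
      → {w : List Bool // w.length = 2 * n ∧ (Stmt14.DyckL w ∧ Stmt14.NoU3 w)} :=
    fun x => ⟨Stmt14.enc x.1, Stmt14.enc_mem x.1 x.2.1 x.2.2⟩
  have hf : Function.Bijective f := by
    constructor
    · intro a b hab
      exact Subtype.ext (Stmt14.enc_inj (congrArg Subtype.val hab))
    · rintro ⟨w, hlen, hd, hno⟩
      obtain ⟨l, h1, h2, h3⟩ := Stmt14.dec_mem w hlen hd hno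
      exact ⟨⟨l, h1, h2⟩, Subtype.ext h3⟩
  exact (e1.trans (Equiv.ofBijective f hf)).trans e3.symm
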